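/- Let $E_1^u, E_2^u, D_+^u, D_-^u$ and $E_1^v, E_2^v, D_+^v, D_-^v$ be nonnegative real numbers satisfying $E_1 = \tfrac14(D_+ + D_-) + \tfrac12 E_2$ (for both superscripts $u$ and $v$), and set $P = \tfrac14(D_+ - D_-)$ accordingly. Then $E_1^u E_1^v - P^u P^v \ge \tfrac14 E_1^u E_2^v + \tfrac14 E_1^v E_2^u + \tfrac18 D_+^u D_-^v + \tfrac18 D_-^u D_+^v$. -/

import Mathlib

theorem energy_mul_sub_momentum_mul_eq {E1u E2u Dpu Dmu E1v E2v Dpv Dmv Pu Pv : ℝ}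
    (hEu : E1u = (1 / 4) * (Dpu + Dmu) + (1 / 2) * E2u)
    (hEv : E1v = (1 / 4) * (Dpv + Dmv) + (1 / 2) * E2v)
    (hPu : Pu = (1 / 4) * (Dpu - Dmu))
    (hPv : Pv = (1 / 4) * (Dpv - Dmv)) :
    E1u * E1v - Pu * Pv =
      (1 / 4) * E1u * E2v + (1 / 4) * E1v * E2u +
        (1 / 8) * Dpu * Dmv + (1 / 8) * Dmu * Dpv +
        (1 / 16) * ((Dpu + Dmu) * E2v + E2u * (Dpv + Dmv)) := by
  subst hEu hEv hPu hPv
  ring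

theorem stmt_6_general (E1u E2u Dpu Dmu E1v E2v Dpv Dmv Pu Pv : ℝ)
    (hE2u : 0 ≤ E2u) (hDpu : 0 ≤ Dpu) (hDmu : 0 ≤ Dmu)
    (hE2v : 0 ≤ E2v) (hDpv : 0 ≤ Dpv) (hDmv : 0 ≤ Dmv)
    (hEu : E1u = (1 / 4) * (Dpu + Dmu) + (1 / 2) * E2u)
    (hEv : E1v = (1 / 4) * (Dpv + Dmv) + (1 / 2) * E2v)
    (hPu : Pu = (1 / 4) * (Dpu - Dmu))
    (hPv : Pv = (1 / 4) * (Dpv - Dmv)) :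
    (1 / 4) * E1u * E2v + (1 / 4) * E1v * E2u +
      (1 / 8) * Dpu * Dmv + (1 / 8) * Dmu * Dpv ≤ E1u * E1v - Pu * Pv := by
  rw [energy_mul_sub_momentum_mul_eq hEu hEv hPu hPv, le_add_iff_nonneg_right]
  positivity

/-- Algebraic core of the bilinear estimate: for nonnegative reals satisfying the
null-frame relations, `E₁ᵘE₁ᵛ - PᵘPᵛ` dominates the cross terms. -/
theorem stmt_6 (E1u E2u Dpu Dmu E1v E2v Dpv Dmv Pu Pv : ℝ)
    (hE1u : 0 ≤ E1u) (hE2u : 0 ≤ E2u) (hDpu : 0 ≤ Dpu) (hDmu : 0 ≤ Dmu)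
    (hE1v : 0 ≤ E1v) (hE2v : 0 ≤ E2v) (hDpv : 0 ≤ Dpv) (hDmv : 0 ≤ Dmv)
    (hEu : E1u = (1 / 4) * (Dpu + Dmu) + (1 / 2) * E2u)
    (hEv : E1v = (1 / 4) * (Dpv + Dmv) + (1 / 2) * E2v)
    (hPu : Pu = (1 / 4) * (Dpu - Dmu))
    (hPv : Pv = (1 / 4) * (Dpv - Dmv)) :
    (1 / 4) * E1u * E2v + (1 / 4) * E1v * E2u +
      (1 / 8) * Dpu * Dmv + (1 / 8) * Dmu * Dpv ≤ E1u * E1v - Pu * Pv :=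
  stmt_6_general E1u E2u Dpu Dmu E1v E2v Dpv Dmv Pu Pv hE2u hDpu hDmu hE2v hDpv hDmv hEu hEv hPu hPv
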